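/- arXiv:1303.1671 — 6 statements merged into one kernel-verified Lean document; each statement's English description precedes it below -/
import Mathlib

section
/- If the graph G² has a vertex cover X of size n + k, where G is a finite simple graph on n vertices, then the set S = {v ∈ V : (v,1) ∈ X and (v,2) ∈ X} is an odd cycle transversal of G of size exactly k. (Backward direction of Lemma 1.) -/
/-- The graph `G²` on vertex set `V × Bool` (copy 1 = `false`, copy 2 = `true`):
edges `{(u,i),(v,i)}` for every edge `{u,v}` of `G`, plus `{(v,1),(v,2)}` for every `v`. -/
def doubledGraph {V : Type*} (G : SimpleGraph V) : SimpleGraph (V × Bool) where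
  Adj x y := (x.2 = y.2 ∧ G.Adj x.1 y.1) ∨ (x.1 = y.1 ∧ x.2 ≠ y.2)
  symm := by
    constructor
    rintro ⟨u, i⟩ ⟨v, j⟩ (⟨h1, h2⟩ | ⟨h1, h2⟩)
    · exact Or.inl ⟨h1.symm, h2.symm⟩
    · exact Or.inr ⟨h1.symm, h2.symm⟩
  loopless := by
    constructor
    rintro ⟨u, i⟩ (⟨_, h⟩ | ⟨_, h⟩)
    · exact G.loopless.irrefl u h
    · exact h rfl

/-- `X` is a vertex cover of `G`: it contains an endpoint of every edge. -/
def IsVertexCover {α : Type*} (G : SimpleGraph α) (X : Set α) : Prop :=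
  ∀ ⦃u v : α⦄, G.Adj u v → u ∈ X ∨ v ∈ X

/-!
Let `A` and `B` be the sets of vertices whose first, resp. second, copy lies in `X`. The edges
`{(v,1),(v,2)}` force `A ∪ B = V`, so `|X| = |A| + |B| = |A ∪ B| + |A ∩ B| = n + |S|` with
`S = A ∩ B`. Outside `S` exactly one copy of each vertex lies in `X`; colouring `v` by whether
`(v,1) ∈ X` is proper, because an edge of `G` with both ends of the same colour would leave one of
its two copies in `G²` uncovered.
-/

def bothCopies {V : Type*} (X : Set (V × Bool)) : Set V :=
  {v | (v, false) ∈ X ∧ (v, true) ∈ X}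

theorem Set.ncard_eq_ncard_false_add_ncard_true {α : Type*} [Finite α] (X : Set (α × Bool)) :
    X.ncard = {a | (a, false) ∈ X}.ncard + {a | (a, true) ∈ X}.ncard := by
  have hsplit : X = (·, false) '' {a | (a, false) ∈ X} ∪ (·, true) '' {a | (a, true) ∈ X} := by
    ext ⟨a, b⟩
    cases b <;> simp
  have hdisj : Disjoint ((·, false) '' {a | (a, false) ∈ X}) ((·, true) '' {a | (a, true) ∈ X}) :=
    Set.disjoint_left.mpr (by simp)
  rw [hsplit, Set.ncard_union_eq hdisj,
    Set.ncard_image_of_injective _ (Prod.mk_left_injective false),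
    Set.ncard_image_of_injective _ (Prod.mk_left_injective true)]
  simp

namespace IsVertexCover

variable {V : Type*} {G : SimpleGraph V} {X : Set (V × Bool)}

theorem false_mem_or_true_mem (hX : IsVertexCover (doubledGraph G) X) (v : V) :
    (v, false) ∈ X ∨ (v, true) ∈ X :=
  hX (Or.inr ⟨rfl, Bool.false_ne_true⟩)

theorem ncard_eq_card_add_ncard_bothCopies [Fintype V]
    (hX : IsVertexCover (doubledGraph G) X) :
    X.ncard = Fintype.card V + (bothCopies X).ncard := by
  have hunion : {v | (v, false) ∈ X} ∪ {v | (v, true) ∈ X} = Set.univ :=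
    Set.eq_univ_of_forall hX.false_mem_or_true_mem
  rw [X.ncard_eq_ncard_false_add_ncard_true, ← Set.ncard_union_add_ncard_inter, hunion,
    Set.ncard_univ, Nat.card_eq_fintype_card]
  rfl

def coloringInduceCompl (hX : IsVertexCover (doubledGraph G) X) :
    (G.induce (bothCopies X)ᶜ).Coloring Prop :=
  SimpleGraph.Coloring.mk (fun v => (v.1, false) ∈ X) <| by
    rintro ⟨u, hu⟩ ⟨v, hv⟩ huv hcolor
    simp only [SimpleGraph.comap_adj, Function.Embedding.coe_subtype] at huv
    simp only [bothCopies, Set.mem_compl_iff, Set.mem_ofPred_eq, not_and] at hu hv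
    rw [eq_iff_iff] at hcolor
    by_cases huf : (u, false) ∈ X
    · rcases hX (show (doubledGraph G).Adj (u, true) (v, true) from Or.inl ⟨rfl, huv⟩) with h | h
      · exact hu huf h
      · exact hv (hcolor.mp huf) h
    · rcases hX (show (doubledGraph G).Adj (u, false) (v, false) from Or.inl ⟨rfl, huv⟩) with
        h | h
      · exact huf h
      · exact huf (hcolor.mpr h)

theorem colorable_induce_compl_bothCopies (hX : IsVertexCover (doubledGraph G) X) :
    (G.induce (bothCopies X)ᶜ).Colorable 2 := by
  simpa using hX.coloringInduceCompl.colorable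

end IsVertexCover

/-- Backward direction of Lemma 1: if `G²` has a vertex cover `X` of size `n + k`, then
`S = {v | (v,1) ∈ X ∧ (v,2) ∈ X}` is an odd cycle transversal of `G` of size exactly `k`. -/
theorem stmt1 {V : Type*} [Fintype V] (G : SimpleGraph V) (X : Set (V × Bool)) (k : ℕ)
    (hX : IsVertexCover (doubledGraph G) X)
    (hcard : X.ncard = Fintype.card V + k) :
    (G.induce (({v : V | (v, false) ∈ X ∧ (v, true) ∈ X}ᶜ : Set V))).Colorable 2 ∧
    {v : V | (v, false) ∈ X ∧ (v, true) ∈ X}.ncard = k := by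
  refine ⟨hX.colorable_induce_compl_bothCopies, ?_⟩
  have := hX.ncard_eq_card_add_ncard_bothCopies
  change (bothCopies X).ncard = k
  omega
end

section
/- For a finite simple graph G on n vertices and a non-negative integer k, G has an odd cycle transversal of size at most k if and only if G² has a vertex cover of size at most n + k. -/
namespace SimpleGraph

variable {V : Type*}

lemma colorable_two_induce_compl_iff {G : SimpleGraph V} {S : Set V} :
    (G.induce (Sᶜ : Set V)).Colorable 2 ↔
      ∃ c : V → Bool, ∀ ⦃u v⦄, u ∉ S → v ∉ S → G.Adj u v → c u ≠ c v := by
  classical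
  constructor
  · rintro ⟨C⟩
    refine ⟨fun v => if h : v ∈ S then false else C ⟨v, h⟩ = 1, fun u v hu hv huv => ?_⟩
    have hC : C ⟨u, hu⟩ ≠ C ⟨v, hv⟩ := C.valid huv
    simp only [hu, hv, dite_false, ne_eq, decide_eq_decide]
    omega
  · rintro ⟨c, hc⟩
    exact (Coloring.mk (fun v : (Sᶜ : Set V) => c v) fun {u v} huv => hc u.2 v.2 huv).colorable

end SimpleGraph

section TransversalCover

variable {V : Type*}

def transversalCover (S : Set V) (c : V → Bool) : Set (V × Bool) :=
  {x | x.1 ∈ S ∨ x.2 = c x.1}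

@[simp]
lemma mem_transversalCover {S : Set V} {c : V → Bool} {x : V × Bool} :
    x ∈ transversalCover S c ↔ x.1 ∈ S ∨ x.2 = c x.1 :=
  Iff.rfl

lemma transversalCover_eq_range_union_image (S : Set V) (c : V → Bool) :
    transversalCover S c = Set.range (fun v => (v, c v)) ∪ (fun v => (v, !c v)) '' S := by
  ext ⟨v, b⟩
  rcases Bool.eq_or_eq_not b (c v) with rfl | rfl <;> by_cases v ∈ S <;> simp_all

lemma ncard_transversalCover [Finite V] (S : Set V) (c : V → Bool) :
    (transversalCover S c).ncard = Nat.card V + S.ncard := by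
  have hdisj : Disjoint (Set.range fun v => (v, c v)) ((fun v => (v, !c v)) '' S) := by
    rw [Set.disjoint_left]
    rintro _ ⟨v, rfl⟩ ⟨w, -, hwv⟩
    obtain ⟨rfl, h⟩ := Prod.ext_iff.mp hwv
    simp at h
  rw [transversalCover_eq_range_union_image, Set.ncard_union_eq hdisj,
    Set.ncard_range_of_injective (fun _ _ h => congrArg Prod.fst h),
    Set.ncard_image_of_injective _ (fun _ _ h => congrArg Prod.fst h)]

lemma isVertexCover_transversalCover {G : SimpleGraph V} {S : Set V} {c : V → Bool}
    (hc : ∀ ⦃u v⦄, u ∉ S → v ∉ S → G.Adj u v → c u ≠ c v) :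
    IsVertexCover (doubledGraph G) (transversalCover S c) := by
  rintro ⟨u, i⟩ ⟨v, j⟩ (⟨rfl, huv⟩ | ⟨rfl, hij⟩)
  · by_cases hu : u ∈ S
    · exact Or.inl (Or.inl hu)
    by_cases hv : v ∈ S
    · exact Or.inr (Or.inl hv)
    rcases Bool.eq_or_eq_not i (c u) with h | h
    · exact Or.inl (Or.inr h)
    · exact Or.inr (Or.inr (h.trans (Bool.eq_not.mpr (hc hu hv huv).symm).symm))
  · by_cases hu : u ∈ S
    · exact Or.inl (Or.inl hu)
    rcases Bool.eq_or_eq_not i (c u) with h | h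
    · exact Or.inl (Or.inr h)
    · change i ≠ j at hij
      exact Or.inr (Or.inr (by rw [Bool.eq_not.mpr hij.symm, h, Bool.not_not]))

def bothCopiesIn (X : Set (V × Bool)) : Set V :=
  {v | ∀ b, (v, b) ∈ X}

variable {G : SimpleGraph V} {X : Set (V × Bool)} [DecidablePred (· ∈ X)]

lemma transversalCover_subset_of_isVertexCover (hX : IsVertexCover (doubledGraph G) X) :
    transversalCover (bothCopiesIn X) (fun v => decide ((v, true) ∈ X)) ⊆ X := by
  rintro ⟨v, b⟩ (hv | hb)
  · exact hv b
  · dsimp only at hb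
    subst hb
    by_cases hvt : (v, true) ∈ X
    · simp [hvt]
    · have := hX (show (doubledGraph G).Adj (v, false) (v, true) from Or.inr ⟨rfl, by simp⟩)
      simp_all

lemma mem_iff_eq_decide_of_isVertexCover (hX : IsVertexCover (doubledGraph G) X) {v : V}
    (hv : v ∉ bothCopiesIn X) (b : Bool) : (v, b) ∈ X ↔ b = decide ((v, true) ∈ X) := by
  refine ⟨fun hvb => ?_, fun hb => transversalCover_subset_of_isVertexCover hX (Or.inr hb)⟩
  cases b
  · by_contra hvt
    exact hv fun b => by cases b <;> simp_all
  · simpa using hvb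

lemma decide_mem_ne_of_isVertexCover (hX : IsVertexCover (doubledGraph G) X) ⦃u v : V⦄
    (hu : u ∉ bothCopiesIn X) (hv : v ∉ bothCopiesIn X) (huv : G.Adj u v) :
    decide ((u, true) ∈ X) ≠ decide ((v, true) ∈ X) := by
  intro h
  set b := decide ((u, true) ∈ X)
  have hcov := hX (show (doubledGraph G).Adj (u, !b) (v, !b) from Or.inl ⟨rfl, huv⟩)
  rw [mem_iff_eq_decide_of_isVertexCover hX hu, mem_iff_eq_decide_of_isVertexCover hX hv,
    ← h] at hcov
  simp [b] at hcov

end TransversalCover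

/-- `G` has an odd cycle transversal of size at most `k` iff `G²` has a vertex cover of size
at most `n + k`. -/
theorem stmt2 {V : Type*} [Fintype V] (G : SimpleGraph V) (k : ℕ) :
    (∃ S : Set V, (G.induce (Sᶜ : Set V)).Colorable 2 ∧ S.ncard ≤ k) ↔
    (∃ X : Set (V × Bool), IsVertexCover (doubledGraph G) X ∧
      X.ncard ≤ Fintype.card V + k) := by
  classical
  constructor
  · rintro ⟨S, hS, hSk⟩
    obtain ⟨c, hc⟩ := SimpleGraph.colorable_two_induce_compl_iff.mp hS
    refine ⟨transversalCover S c, isVertexCover_transversalCover hc, ?_⟩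
    rw [ncard_transversalCover, Nat.card_eq_fintype_card]
    omega
  · rintro ⟨X, hX, hXk⟩
    refine ⟨bothCopiesIn X, SimpleGraph.colorable_two_induce_compl_iff.mpr
      ⟨_, decide_mem_ne_of_isVertexCover hX⟩, ?_⟩
    have hle := Set.ncard_le_ncard (transversalCover_subset_of_isVertexCover hX)
    rw [ncard_transversalCover, Nat.card_eq_fintype_card] at hle
    omega
end

section
/- Let S be an odd cycle transversal of a finite simple graph G and let (P,Q) be a bipartition of the induced subgraph of G on V \ S. Then P₁ ∪ Q₂ and P₂ ∪ Q₁ are independent sets in G²; equivalently, V(G²) \ (P₁ ∪ Q₂) and V(G²) \ (P₂ ∪ Q₁) are vertex covers of G². (First part of Corollary 1.) -/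
/-- `I` is an independent set of `G`: no two of its vertices are adjacent. -/
def IsIndepSet {α : Type*} (G : SimpleGraph α) (I : Set α) : Prop :=
  ∀ ⦃u : α⦄, u ∈ I → ∀ ⦃v : α⦄, v ∈ I → ¬ G.Adj u v

/-- For `S ⊆ V`, the copy `S_i = {(v,i) : v ∈ S}` inside `V × Bool`. -/
def side {V : Type*} (S : Set V) (b : Bool) : Set (V × Bool) :=
  {x | x.1 ∈ S ∧ x.2 = b}

theorem IsIndepSet.isVertexCover_compl {α : Type*} {G : SimpleGraph α} {I : Set α}
    (hI : IsIndepSet G I) : IsVertexCover G Iᶜ := by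
  intro u v huv
  by_contra! h
  exact hI (Set.notMem_compl_iff.mp h.1) (Set.notMem_compl_iff.mp h.2) huv

theorem IsIndepSet.of_crossing_edges {V : Type*} {G : SimpleGraph V} {T P Q : Set V}
    (hPQ : Disjoint P Q) (hPT : P ⊆ T)
    (hcross : ∀ ⦃u v : V⦄, G.Adj u v → u ∈ T → v ∈ T → (u ∈ P ∧ v ∈ Q) ∨ (u ∈ Q ∧ v ∈ P)) :
    IsIndepSet G P := by
  intro u hu v hv huv
  rcases hcross huv (hPT hu) (hPT hv) with ⟨-, hvQ⟩ | ⟨huQ, -⟩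
  · exact hPQ.ne_of_mem hv hvQ rfl
  · exact hPQ.ne_of_mem hu huQ rfl

theorem mem_side_union_side {V : Type*} {P Q : Set V} {b : Bool} {x : V × Bool} :
    x ∈ side P b ∪ side Q (!b) ↔ x.1 ∈ if x.2 = b then P else Q := by
  obtain ⟨u, i⟩ := x
  cases i <;> cases b <;> simp [side]

theorem isIndepSet_doubledGraph_side_union_side {V : Type*} {G : SimpleGraph V} {P Q : Set V}
    (hP : IsIndepSet G P) (hQ : IsIndepSet G Q) (hPQ : Disjoint P Q) (b : Bool) :
    IsIndepSet (doubledGraph G) (side P b ∪ side Q (!b)) := by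
  rintro ⟨u, i⟩ hu ⟨v, j⟩ hv (⟨hij, huv⟩ | ⟨huv, hij⟩)
  all_goals
    rw [mem_side_union_side] at hu hv
    dsimp only at hij hu hv huv
  · subst hij
    split_ifs at hu hv
    · exact hP hu hv huv
    · exact hQ hu hv huv
  · subst huv
    split_ifs at hu hv with hib hjb hjb
    · exact hij (hib.trans hjb.symm)
    · exact hPQ.ne_of_mem hu hv rfl
    · exact hPQ.ne_of_mem hv hu rfl
    · exact hij ((Bool.eq_not.mpr hib).trans (Bool.eq_not.mpr hjb).symm)

theorem stmt3_general {V : Type*} (G : SimpleGraph V) (S P Q : Set V)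
    (hdisj : Disjoint P Q) (hunion : P ∪ Q = Sᶜ)
    (hbip : ∀ ⦃u v : V⦄, G.Adj u v → u ∈ Sᶜ → v ∈ Sᶜ →
      (u ∈ P ∧ v ∈ Q) ∨ (u ∈ Q ∧ v ∈ P)) :
    IsIndepSet (doubledGraph G) (side P false ∪ side Q true) ∧
    IsIndepSet (doubledGraph G) (side P true ∪ side Q false) ∧
    IsVertexCover (doubledGraph G) ((side P false ∪ side Q true)ᶜ) ∧
    IsVertexCover (doubledGraph G) ((side P true ∪ side Q false)ᶜ) := by
  have hP : IsIndepSet G P :=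
    .of_crossing_edges hdisj (hunion ▸ Set.subset_union_left) hbip
  have hQ : IsIndepSet G Q :=
    .of_crossing_edges hdisj.symm (hunion ▸ Set.subset_union_right)
      fun _ _ huv hu hv ↦ (hbip huv hu hv).symm
  have hind := isIndepSet_doubledGraph_side_union_side hP hQ hdisj
  exact ⟨hind false, hind true, (hind false).isVertexCover_compl,
    (hind true).isVertexCover_compl⟩

/-- First part of Corollary 1: if `S` is an OCT of `G` and `(P,Q)` is a bipartition of the
induced subgraph of `G` on `V \ S`, then `P₁ ∪ Q₂` and `P₂ ∪ Q₁` are independent sets in `G²`;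
equivalently their complements are vertex covers of `G²`. -/
theorem stmt3 {V : Type*} (G : SimpleGraph V) (S P Q : Set V)
    (hOCT : (G.induce (Sᶜ : Set V)).Colorable 2)
    (hdisj : Disjoint P Q) (hunion : P ∪ Q = Sᶜ)
    (hbip : ∀ ⦃u v : V⦄, G.Adj u v → u ∈ Sᶜ → v ∈ Sᶜ →
      (u ∈ P ∧ v ∈ Q) ∨ (u ∈ Q ∧ v ∈ P)) :
    IsIndepSet (doubledGraph G) (side P false ∪ side Q true) ∧
    IsIndepSet (doubledGraph G) (side P true ∪ side Q false) ∧
    IsVertexCover (doubledGraph G) ((side P false ∪ side Q true)ᶜ) ∧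
    IsVertexCover (doubledGraph G) ((side P true ∪ side Q false)ᶜ) :=
  stmt3_general G S P Q hdisj hunion hbip
end

section
/- Let I be an independent set in G², where G is a finite simple graph with vertex set V. Define P = {v ∈ V : (v,1) ∈ I}, Q = {v ∈ V : (v,2) ∈ I}, and S = {v ∈ V : (v,1) ∉ I and (v,2) ∉ I}. Then S is an odd cycle transversal of G and (P,Q) is a bipartition of the induced subgraph of G on V \ S. (Second part of Corollary 1.) -/
namespace SimpleGraph

variable {V : Type*} {G : SimpleGraph V}

theorem isBipartiteWith_induce_union {s t : Set V} (hst : Disjoint s t)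
    (hadj : ∀ ⦃u v : V⦄, G.Adj u v → u ∈ s ∪ t → v ∈ s ∪ t → u ∈ s ∧ v ∈ t ∨ u ∈ t ∧ v ∈ s) :
    (G.induce (s ∪ t)).IsBipartiteWith (Subtype.val ⁻¹' s) (Subtype.val ⁻¹' t) where
  disjoint := hst.preimage _
  mem_of_adj u v huv := hadj huv u.2 v.2

end SimpleGraph

namespace doubledGraph

variable {V : Type*} {G : SimpleGraph V} {I : Set (V × Bool)}

def layer (I : Set (V × Bool)) (b : Bool) : Set V := {v | (v, b) ∈ I}

theorem union_layer_eq_compl :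
    layer I false ∪ layer I true = {v : V | (v, false) ∉ I ∧ (v, true) ∉ I}ᶜ := by
  ext v
  simp only [layer, Set.mem_union, Set.mem_ofPred_eq, Set.mem_compl_iff, not_and_or, not_not]

theorem disjoint_layer (hI : IsIndepSet (doubledGraph G) I) :
    Disjoint (layer I false) (layer I true) :=
  Set.disjoint_left.mpr fun _ hf ht => hI hf ht (Or.inr ⟨rfl, Bool.false_ne_true⟩)

theorem not_mem_layer_of_adj (hI : IsIndepSet (doubledGraph G) I) {u v : V} (huv : G.Adj u v)
    {b : Bool} (hu : u ∈ layer I b) : v ∉ layer I b :=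
  fun hv => hI hu hv (Or.inl ⟨rfl, huv⟩)

theorem mem_layer_of_adj (hI : IsIndepSet (doubledGraph G) I) {u v : V} (huv : G.Adj u v)
    (hu : u ∈ layer I false ∪ layer I true) (hv : v ∈ layer I false ∪ layer I true) :
    u ∈ layer I false ∧ v ∈ layer I true ∨ u ∈ layer I true ∧ v ∈ layer I false := by
  rcases hu with hu | hu
  · exact Or.inl ⟨hu, hv.resolve_left (not_mem_layer_of_adj hI huv hu)⟩
  · exact Or.inr ⟨hu, hv.resolve_right (not_mem_layer_of_adj hI huv hu)⟩

end doubledGraph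

open doubledGraph in
/-- Second part of Corollary 1: if `I` is an independent set in `G²`, then with
`P = {v | (v,1) ∈ I}`, `Q = {v | (v,2) ∈ I}` and `S = {v | (v,1) ∉ I ∧ (v,2) ∉ I}`,
the set `S` is an OCT of `G` and `(P,Q)` is a bipartition of `G` induced on `V \ S`. -/
theorem stmt4 {V : Type*} (G : SimpleGraph V) (I : Set (V × Bool))
    (hI : IsIndepSet (doubledGraph G) I) :
    (G.induce (({v : V | (v, false) ∉ I ∧ (v, true) ∉ I}ᶜ : Set V))).Colorable 2 ∧
    Disjoint {v : V | (v, false) ∈ I} {v : V | (v, true) ∈ I} ∧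
    {v : V | (v, false) ∈ I} ∪ {v : V | (v, true) ∈ I}
      = ({v : V | (v, false) ∉ I ∧ (v, true) ∉ I}ᶜ : Set V) ∧
    ∀ ⦃u v : V⦄, G.Adj u v →
      u ∈ ({w : V | (w, false) ∉ I ∧ (w, true) ∉ I}ᶜ : Set V) →
      v ∈ ({w : V | (w, false) ∉ I ∧ (w, true) ∉ I}ᶜ : Set V) →
      (u ∈ {w : V | (w, false) ∈ I} ∧ v ∈ {w : V | (w, true) ∈ I}) ∨
      (u ∈ {w : V | (w, true) ∈ I} ∧ v ∈ {w : V | (w, false) ∈ I}) := by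
  have hcross := fun ⦃u v : V⦄ (huv : G.Adj u v) => mem_layer_of_adj hI huv
  rw [← union_layer_eq_compl (I := I)]
  exact ⟨(SimpleGraph.isBipartiteWith_induce_union (disjoint_layer hI) hcross).isBipartite,
    disjoint_layer hI, rfl, hcross⟩
end

section
/- Let H be a finite simple graph on h vertices, T an odd cycle transversal of H, and B = V(H) \ T. If H has an odd cycle transversal T' ⊆ B of size r, then H² has a vertex cover X of size h + r such that for each v ∈ T, exactly one of (v,1), (v,2) belongs to X. (Forward direction of Observation 1.) -/
/-!
Fix a 2-colouring `c : V → Bool` of `H - T'`. The set `X` consisting of `(v, c v)` for every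
vertex `v` and of both copies of every `v ∈ T'` has `h + |T'|` elements. It covers every rung
`{(v,1),(v,2)}`, since one of the two copies is `(v, c v)`; and it covers every edge
`{(u,i),(v,i)}` inside a copy, since either an endpoint lies in `T'` or `c u ≠ c v`, so one of
them equals `i`. A vertex `v ∈ T` is not in `T'`, so exactly one copy of it, `(v, c v)`, lies in `X`.
-/

theorem Bool.eq_or_eq_of_ne {a b : Bool} (h : a ≠ b) (x : Bool) : x = a ∨ x = b :=
  (Bool.eq_or_eq_not x a).imp_right fun hx => hx.trans (Bool.eq_not_iff.mpr h.symm).symm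

section DoubledCover

variable {V : Type*}

theorem SimpleGraph.exists_bool_ne_of_colorable_induce_compl {G : SimpleGraph V} {s : Set V}
    (h : (G.induce sᶜ).Colorable 2) :
    ∃ c : V → Bool, ∀ ⦃u v⦄, u ∉ s → v ∉ s → G.Adj u v → c u ≠ c v := by
  classical
  obtain ⟨C⟩ := h
  refine ⟨fun v => if hv : v ∈ sᶜ then finTwoEquiv (C ⟨v, hv⟩) else false,
    fun u v hu hv huv => ?_⟩
  have hC : C ⟨u, hu⟩ ≠ C ⟨v, hv⟩ := C.valid huv
  simpa [hu, hv] using hC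

def doubledCover (s : Set V) (c : V → Bool) : Set (V × Bool) :=
  {p | p.1 ∈ s ∨ p.2 = c p.1}

variable {s : Set V} {c : V → Bool}

theorem mem_doubledCover_of_notMem {v : V} (hv : v ∉ s) (b : Bool) :
    (v, b) ∈ doubledCover s c ↔ b = c v := by
  simp [doubledCover, hv]

theorem isVertexCover_doubledCover {G : SimpleGraph V}
    (hc : ∀ ⦃u v⦄, u ∉ s → v ∉ s → G.Adj u v → c u ≠ c v) :
    IsVertexCover (doubledGraph G) (doubledCover s c) := by
  rintro ⟨u, i⟩ ⟨v, j⟩ (⟨rfl, huv⟩ | ⟨rfl, hij⟩)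
  · by_cases hu : u ∈ s
    · exact .inl (.inl hu)
    by_cases hv : v ∈ s
    · exact .inr (.inl hv)
    exact (Bool.eq_or_eq_of_ne (hc hu hv huv) i).imp .inr .inr
  · exact (Bool.eq_or_eq_of_ne (Ne.symm hij) (c u)).symm.imp (.inr ·.symm) (.inr ·.symm)

theorem doubledCover_eq_union (s : Set V) (c : V → Bool) :
    doubledCover s c = Set.range (fun v => (v, c v)) ∪ (fun v => (v, !c v)) '' s := by
  ext ⟨v, b⟩
  simp only [doubledCover, Set.mem_ofPred_eq, Set.mem_union, Set.mem_range, Set.mem_image,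
    Prod.mk.injEq, exists_eq_left]
  rcases Bool.eq_or_eq_not b (c v) with rfl | rfl <;> simp

theorem ncard_doubledCover [Finite V] (s : Set V) (c : V → Bool) :
    (doubledCover s c).ncard = Nat.card V + s.ncard := by
  have hdisj : Disjoint (Set.range fun v => (v, c v)) ((fun v => (v, !c v)) '' s) := by
    rw [Set.disjoint_left]
    rintro _ ⟨u, rfl⟩ ⟨w, -, hw⟩
    simp only [Prod.mk.injEq] at hw
    obtain ⟨rfl, h⟩ := hw
    exact Bool.not_ne_self _ h
  rw [doubledCover_eq_union, Set.ncard_union_eq hdisj,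
    Set.ncard_range_of_injective fun _ _ h => congrArg Prod.fst h,
    Set.ncard_image_of_injective s fun _ _ h => congrArg Prod.fst h]

end DoubledCover

theorem stmt8_general {V : Type*} [Fintype V] (H : SimpleGraph V) (T T' : Set V) (r : ℕ)
    (hT'B : T' ⊆ (Set.univ \ T : Set V))
    (hT' : (H.induce (T'ᶜ : Set V)).Colorable 2)
    (hr : T'.ncard = r) :
    ∃ X : Set (V × Bool), IsVertexCover (doubledGraph H) X ∧
      X.ncard = Fintype.card V + r ∧
      ∀ v ∈ T, ((v, false) ∈ X ∧ (v, true) ∉ X) ∨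
               ((v, false) ∉ X ∧ (v, true) ∈ X) := by
  obtain ⟨c, hc⟩ := H.exists_bool_ne_of_colorable_induce_compl hT'
  refine ⟨doubledCover T' c, isVertexCover_doubledCover hc, ?_, fun v hv => ?_⟩
  · rw [ncard_doubledCover, hr, Nat.card_eq_fintype_card]
  · have hvT' : v ∉ T' := fun h => (hT'B h).2 hv
    simp only [mem_doubledCover_of_notMem hvT']
    cases c v <;> simp

/-- Forward direction of Observation 1: if `H` (with OCT `T`, `B = V(H) \ T`) has an OCT
`T' ⊆ B` of size `r`, then `H²` has a vertex cover `X` of size `h + r` such that for each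
`v ∈ T` exactly one of `(v,1)`, `(v,2)` belongs to `X`. -/
theorem stmt8 {V : Type*} [Fintype V] (H : SimpleGraph V) (T T' : Set V) (r : ℕ)
    (hT : (H.induce (Tᶜ : Set V)).Colorable 2)
    (hT'B : T' ⊆ (Set.univ \ T : Set V))
    (hT' : (H.induce (T'ᶜ : Set V)).Colorable 2)
    (hr : T'.ncard = r) :
    ∃ X : Set (V × Bool), IsVertexCover (doubledGraph H) X ∧
      X.ncard = Fintype.card V + r ∧
      ∀ v ∈ T, ((v, false) ∈ X ∧ (v, true) ∉ X) ∨
               ((v, false) ∉ X ∧ (v, true) ∈ X) :=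
  stmt8_general H T T' r hT'B hT' hr
end

section
/- Let G be a finite simple graph, A ⊆ V(G), and let Y ⊆ A be a vertex cover of the induced subgraph G[A]. Let W = {u ∈ V(G) \ A : u is adjacent in G to some vertex of A \ Y}, and let Z be a minimum vertex cover of the induced subgraph G[(V(G) \ A) \ W]. Then for every vertex cover X of G with X ∩ A = Y, we have |Y ∪ W ∪ Z| ≤ |X|; that is, Y ∪ W ∪ Z is a minimum vertex cover of G among all vertex covers whose intersection with A equals Y. (Optimality of step 2 of the disjoint compression algorithm.) -/
/-- `X` is a vertex cover of the induced subgraph `G[A]`: it contains an endpoint of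
every edge of `G` with both endpoints in `A`. -/
def IsVertexCoverOn {α : Type*} (G : SimpleGraph α) (A X : Set α) : Prop :=
  ∀ ⦃u v : α⦄, G.Adj u v → u ∈ A → v ∈ A → u ∈ X ∨ v ∈ X

/-!
Any vertex cover `X` with `X ∩ A = Y` must contain every neighbour of `A \ Y`, i.e. `W ⊆ X \ A`,
and the remaining part `X ∩ (Aᶜ \ W)` is a vertex cover of `G[Aᶜ \ W]`, hence has at least
`|Z|` elements. So `|X| = |Y| + |W| + |X ∩ (Aᶜ \ W)| ≥ |Y| + |W| + |Z| ≥ |Y ∪ W ∪ Z|`.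
-/

namespace IsVertexCover

variable {α : Type*} {G : SimpleGraph α} {X : Set α}

theorem isVertexCoverOn_inter (hX : IsVertexCover G X) (B : Set α) :
    IsVertexCoverOn G B (X ∩ B) := fun _ _ huv hu hv =>
  (hX huv).imp (fun h => ⟨h, hu⟩) (fun h => ⟨h, hv⟩)

theorem mem_of_adj_of_notMem (hX : IsVertexCover G X) {u w : α} (huw : G.Adj u w)
    (hw : w ∉ X) : u ∈ X :=
  (hX huw).resolve_right hw

end IsVertexCover

theorem Set.ncard_eq_inter_add_ncard_add_inter_sdiff {α : Type*} {X A W : Set α}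
    (hX : X.Finite) (hW : W ⊆ X \ A) :
    X.ncard = (X ∩ A).ncard + W.ncard + (X ∩ (Aᶜ \ W)).ncard := by
  have hXAW : (X \ A) \ W = X ∩ (Aᶜ \ W) := by
    ext; simp only [Set.mem_sdiff, Set.mem_inter_iff, Set.mem_compl_iff, and_assoc]
  rw [← Set.ncard_inter_add_ncard_sdiff_eq_ncard X A hX,
    ← Set.ncard_inter_add_ncard_sdiff_eq_ncard (X \ A) W hX.sdiff,
    Set.inter_eq_right.mpr hW, hXAW, add_assoc]

theorem stmt12_general {V : Type*} [Fintype V] (G : SimpleGraph V) (A Y W Z : Set V)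
    (hW : W = {u : V | u ∈ Aᶜ ∧ ∃ w ∈ A \ Y, G.Adj u w})
    (hZmin : ∀ Z' : Set V, Z' ⊆ Aᶜ \ W → IsVertexCoverOn G (Aᶜ \ W) Z' →
      Z.ncard ≤ Z'.ncard) :
    ∀ X : Set V, IsVertexCover G X → X ∩ A = Y →
      (Y ∪ W ∪ Z).ncard ≤ X.ncard := by
  intro X hX hXA
  have hWX : W ⊆ X \ A := by
    rw [hW]
    rintro u ⟨huA, w, ⟨hwA, hwY⟩, huw⟩
    exact ⟨hX.mem_of_adj_of_notMem huw fun hwX => hwY (hXA ▸ ⟨hwX, hwA⟩), huA⟩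
  have hZle := hZmin _ Set.inter_subset_right (hX.isVertexCoverOn_inter (Aᶜ \ W))
  calc (Y ∪ W ∪ Z).ncard ≤ Y.ncard + W.ncard + Z.ncard :=
        (Set.ncard_union_le _ _).trans (Nat.add_le_add_right (Set.ncard_union_le _ _) _)
    _ ≤ (X ∩ A).ncard + W.ncard + (X ∩ (Aᶜ \ W)).ncard := by rw [hXA]; omega
    _ = X.ncard := (Set.ncard_eq_inter_add_ncard_add_inter_sdiff X.toFinite hWX).symm

/-- Optimality of step 2 of the disjoint compression algorithm: with `Y`, `W` as before and
`Z` a *minimum* vertex cover of `G[(V(G) \ A) \ W]`, every vertex cover `X` of `G` with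
`X ∩ A = Y` satisfies `|Y ∪ W ∪ Z| ≤ |X|`. -/
theorem stmt12 {V : Type*} [Fintype V] (G : SimpleGraph V) (A Y W Z : Set V)
    (hYA : Y ⊆ A) (hY : IsVertexCoverOn G A Y)
    (hW : W = {u : V | u ∈ Aᶜ ∧ ∃ w ∈ A \ Y, G.Adj u w})
    (hZsub : Z ⊆ Aᶜ \ W) (hZ : IsVertexCoverOn G (Aᶜ \ W) Z)
    (hZmin : ∀ Z' : Set V, Z' ⊆ Aᶜ \ W → IsVertexCoverOn G (Aᶜ \ W) Z' →
      Z.ncard ≤ Z'.ncard) :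
    ∀ X : Set V, IsVertexCover G X → X ∩ A = Y →
      (Y ∪ W ∪ Z).ncard ≤ X.ncard :=
  stmt12_general G A Y W Z hW hZmin
end
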